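/- Let g : [0,1] → ℝ be continuous with g > 0, let μ < τ be real numbers, let u be a C² solution of -(g·u')' = μ·g·u and v a C² solution of -(g·v')' = τ·g·v on [0,1]. Suppose u(a) = u(b) = 0 for some 0 ≤ a < b ≤ 1 with u(x) ≠ 0 for all x ∈ (a,b). Then v has a zero in (a,b). -/

import Mathlib

/-!
Suppose `v` has no zero in `(a, b)`. Then `u v` has constant sign there, and replacing `v` by `-v`
we may assume `u v > 0`. The Wronskian `W = g (u' v - u v')` has `W' = (τ - μ) g u v > 0`, so
`W a < W b`; but `u a = u b = 0` gives `W a = g a (u v)' a ≥ 0 ≥ g b (u v)' b = W b`.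

Since `g` is only continuous, `W'` is available only where `g` is differentiable. One of `μ, τ`
is nonzero; for the corresponding solution `w`, with eigenvalue `λ ≠ 0`, the flux `g w'` has
derivative `-λ g w ≠ 0` on `(a, b)`, hence is injective: `w'` vanishes at most once, and
elsewhere `g = (g w') / w'` is differentiable. The fundamental theorem of calculus with a
countable exceptional set then still yields `W b - W a = ∫ (τ - μ) g u v`.
-/

open Set Filter Topology MeasureTheory

theorem IsPreconnected.forall_pos_or_forall_neg {X : Type*} [TopologicalSpace X] {s : Set X}
    (hs : IsPreconnected s) {f : X → ℝ} (hf : ContinuousOn f s) (hf0 : ∀ x ∈ s, f x ≠ 0) :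
    (∀ x ∈ s, 0 < f x) ∨ ∀ x ∈ s, f x < 0 := by
  by_contra! ⟨⟨x, hx, hfx⟩, ⟨y, hy, hfy⟩⟩
  obtain ⟨z, hz, hfz⟩ := hs.intermediate_value hx hy hf ⟨hfx, hfy⟩
  exact hf0 z hz hfz

theorem nonneg_of_hasDerivAt_of_eventually_nonneg_right {f : ℝ → ℝ} {f' a : ℝ}
    (hf : HasDerivAt f f' a) (ha : f a = 0) (hpos : ∀ᶠ x in 𝓝[>] a, 0 ≤ f x) : 0 ≤ f' := by
  refine ge_of_tendsto ((hasDerivAt_iff_tendsto_slope.mp hf).mono_left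
    (nhdsGT_le_nhdsNE a)) ?_
  filter_upwards [hpos, self_mem_nhdsWithin] with x hfx hx
  rw [slope_def_field, ha, sub_zero]
  exact div_nonneg hfx (sub_nonneg.mpr (le_of_lt hx))

theorem nonpos_of_hasDerivAt_of_eventually_nonneg_left {f : ℝ → ℝ} {f' b : ℝ}
    (hf : HasDerivAt f f' b) (hb : f b = 0) (hpos : ∀ᶠ x in 𝓝[<] b, 0 ≤ f x) : f' ≤ 0 := by
  refine le_of_tendsto ((hasDerivAt_iff_tendsto_slope.mp hf).mono_left
    (nhdsLT_le_nhdsNE b)) ?_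
  filter_upwards [hpos, self_mem_nhdsWithin] with x hfx hx
  rw [slope_def_field, hb, sub_zero]
  exact div_nonpos_of_nonneg_of_nonpos hfx (sub_nonpos.mpr (le_of_lt hx))

theorem Set.OrdConnected.injOn_of_hasDerivAt_ne_zero {f f' : ℝ → ℝ} {s : Set ℝ}
    (hs : s.OrdConnected) (hf : ∀ x ∈ s, HasDerivAt f (f' x) x) (hf' : ∀ x ∈ s, f' x ≠ 0) :
    InjOn f s := by
  intro x hx y hy hxy
  by_contra hne
  wlog hlt : x < y generalizing x y
  · exact this hy hx hxy.symm (Ne.symm hne) ((Ne.symm hne).lt_of_le (not_lt.mp hlt))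
  have hxy_sub : Icc x y ⊆ s := hs.out hx hy
  obtain ⟨c, hc, hc0⟩ := exists_hasDerivAt_eq_zero hlt
    (fun z hz => (hf z (hxy_sub hz)).continuousAt.continuousWithinAt) hxy
    (fun z hz => hf z (hxy_sub (Ioo_subset_Icc_self hz)))
  exact hf' c (hxy_sub (Ioo_subset_Icc_self hc)) hc0

theorem DifferentiableAt.of_mul_of_ne_zero {𝕜 : Type*} [NontriviallyNormedField 𝕜] {g h : 𝕜 → 𝕜}
    {x : 𝕜} (hgh : DifferentiableAt 𝕜 (fun t => g t * h t) x) (hh : DifferentiableAt 𝕜 h x)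
    (hx : h x ≠ 0) : DifferentiableAt 𝕜 g x := by
  refine (hgh.fun_div hh hx).congr_of_eventuallyEq ?_
  filter_upwards [hh.continuousAt.eventually_ne hx] with t ht
  exact (mul_div_cancel_right₀ (g t) ht).symm

/-- Since `deriv` is `0` where the flux `g w'` is not differentiable, this forces the flux to be
differentiable only where `μ g w ≠ 0`. -/
def IsSturmLiouvilleSolution (g : ℝ → ℝ) (μ : ℝ) (s : Set ℝ) (w : ℝ → ℝ) : Prop :=
  ∀ x ∈ s, -deriv (fun t => g t * deriv w t) x = μ * g x * w x

namespace IsSturmLiouvilleSolution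

variable {g w : ℝ → ℝ} {μ : ℝ} {s t : Set ℝ} {x : ℝ}

theorem mono (hw : IsSturmLiouvilleSolution g μ t w) (hst : s ⊆ t) :
    IsSturmLiouvilleSolution g μ s w :=
  fun x hx => hw x (hst hx)

theorem neg (hw : IsSturmLiouvilleSolution g μ s w) : IsSturmLiouvilleSolution g μ s (-w) := by
  intro x hx
  have hflux : (fun t => g t * deriv (-w) t) = fun t => -(g t * deriv w t) := by
    funext t
    rw [deriv.neg', mul_neg]
  rw [hflux, deriv.fun_neg, Pi.neg_apply, hw x hx]
  ring

theorem hasDerivAt_of_ne_zero (hw : IsSturmLiouvilleSolution g μ s w) (hx : x ∈ s)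
    (hne : μ * g x * w x ≠ 0) :
    HasDerivAt (fun t => g t * deriv w t) (-(μ * g x * w x)) x := by
  have hd : DifferentiableAt ℝ (fun t => g t * deriv w t) x := by
    by_contra hnd
    have := hw x hx
    rw [deriv_zero_of_not_differentiableAt hnd, neg_zero] at this
    exact hne this.symm
  rw [← hw x hx, neg_neg]
  exact hd.hasDerivAt

theorem hasDerivAt_of_differentiableAt (hw : IsSturmLiouvilleSolution g μ s w) (hx : x ∈ s)
    (hg : DifferentiableAt ℝ g x) (hw' : DifferentiableAt ℝ (deriv w) x) :
    HasDerivAt (fun t => g t * deriv w t) (-(μ * g x * w x)) x := by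
  rw [← hw x hx, neg_neg]
  exact (hg.mul hw').hasDerivAt

theorem subsingleton_not_differentiableAt (hw : IsSturmLiouvilleSolution g μ s w)
    (hs : s.OrdConnected) (hw' : Differentiable ℝ (deriv w)) (hμ : μ ≠ 0)
    (hg : ∀ x ∈ s, g x ≠ 0) (hw0 : ∀ x ∈ s, w x ≠ 0) :
    {x ∈ s | ¬DifferentiableAt ℝ g x}.Subsingleton := by
  have hflux : ∀ x ∈ s, HasDerivAt (fun t => g t * deriv w t) (-(μ * g x * w x)) x :=
    fun x hx => hw.hasDerivAt_of_ne_zero hx (mul_ne_zero (mul_ne_zero hμ (hg x hx)) (hw0 x hx))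
  have hinj := hs.injOn_of_hasDerivAt_ne_zero hflux
    fun x hx => neg_ne_zero.mpr (mul_ne_zero (mul_ne_zero hμ (hg x hx)) (hw0 x hx))
  have hzero : ∀ x ∈ {x ∈ s | ¬DifferentiableAt ℝ g x}, g x * deriv w x = 0 := by
    rintro x ⟨hx, hgx⟩
    by_contra hne
    exact hgx ((hflux x hx).differentiableAt.of_mul_of_ne_zero (hw' x) (right_ne_zero_of_mul hne))
  intro x hx y hy
  exact hinj hx.1 hy.1 ((hzero x hx).trans (hzero y hy).symm)

end IsSturmLiouvilleSolution

noncomputable def sturmLiouvilleWronskian (g u v : ℝ → ℝ) (t : ℝ) : ℝ :=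
  g t * (deriv u t * v t - u t * deriv v t)

section Wronskian

variable {g u v : ℝ → ℝ} {μ τ a b x : ℝ} {s : Set ℝ}

theorem IsSturmLiouvilleSolution.hasDerivAt_wronskian (hu : ContDiff ℝ 2 u) (hv : ContDiff ℝ 2 v)
    (hsu : IsSturmLiouvilleSolution g μ s u) (hsv : IsSturmLiouvilleSolution g τ s v) (hx : x ∈ s)
    (hg : DifferentiableAt ℝ g x) :
    HasDerivAt (sturmLiouvilleWronskian g u v) ((τ - μ) * (g x * (u x * v x))) x := by
  have hW : sturmLiouvilleWronskian g u v =
      fun t => (g t * deriv u t) * v t - u t * (g t * deriv v t) := by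
    funext t
    simp only [sturmLiouvilleWronskian]
    ring
  have hFu := hsu.hasDerivAt_of_differentiableAt hx hg (hu.differentiable_deriv_two x)
  have hFv := hsv.hasDerivAt_of_differentiableAt hx hg (hv.differentiable_deriv_two x)
  rw [hW]
  exact ((hFu.fun_mul ((hv.differentiable two_ne_zero) x).hasDerivAt).fun_sub
    (((hu.differentiable two_ne_zero) x).hasDerivAt.fun_mul hFv)).congr_deriv (by ring)

theorem IsSturmLiouvilleSolution.wronskian_lt_wronskian (hμτ : μ < τ) (hab : a < b)
    (hg : ContinuousOn g (Icc a b)) (hgpos : ∀ x ∈ Ioo a b, 0 < g x) (hu : ContDiff ℝ 2 u)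
    (hv : ContDiff ℝ 2 v) (hsu : IsSturmLiouvilleSolution g μ (Ioo a b) u)
    (hsv : IsSturmLiouvilleSolution g τ (Ioo a b) v)
    (hS : {x ∈ Ioo a b | ¬DifferentiableAt ℝ g x}.Countable)
    (huv : ∀ x ∈ Ioo a b, 0 < u x * v x) :
    sturmLiouvilleWronskian g u v a < sturmLiouvilleWronskian g u v b := by
  have hu₀ := (hu.differentiable two_ne_zero).continuous
  have hv₀ := (hv.differentiable two_ne_zero).continuous
  have hu₁ := hu.continuous_deriv one_le_two
  have hv₁ := hv.continuous_deriv one_le_two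
  have hint : IntervalIntegrable (fun x => (τ - μ) * (g x * (u x * v x))) volume a b := by
    refine ContinuousOn.intervalIntegrable ?_
    rw [uIcc_of_le hab.le]
    exact continuousOn_const.mul (hg.mul (hu₀.mul hv₀).continuousOn)
  have hFTC : ∫ x in a..b, (τ - μ) * (g x * (u x * v x)) =
      sturmLiouvilleWronskian g u v b - sturmLiouvilleWronskian g u v a := by
    refine integral_eq_of_hasDerivAt_off_countable_of_le _ _ hab.le hS ?_ ?_ hint
    · exact hg.mul ((hu₁.mul hv₀).sub (hu₀.mul hv₁)).continuousOn
    · rintro x ⟨hx, hgx⟩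
      exact hsu.hasDerivAt_wronskian hu hv hsv hx (not_not.mp fun h => hgx ⟨hx, h⟩)
  rw [← sub_pos, ← hFTC]
  exact intervalIntegral.intervalIntegral_pos_of_pos_on hint
    (fun x hx => mul_pos (sub_pos.mpr hμτ) (mul_pos (hgpos x hx) (huv x hx))) hab

theorem sturmLiouvilleWronskian_of_eq_zero (hu : DifferentiableAt ℝ u x)
    (hv : DifferentiableAt ℝ v x) (hx : u x = 0) :
    sturmLiouvilleWronskian g u v x = g x * deriv (u * v) x := by
  rw [sturmLiouvilleWronskian, deriv_mul hu hv, hx]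
  ring

end Wronskian

theorem IsSturmLiouvilleSolution.exists_mul_nonpos {g u v : ℝ → ℝ} {μ τ a b : ℝ} (hμτ : μ < τ)
    (hab : a < b) (hg : ContinuousOn g (Icc a b)) (hgpos : ∀ x ∈ Icc a b, 0 < g x)
    (hu : ContDiff ℝ 2 u) (hv : ContDiff ℝ 2 v) (hsu : IsSturmLiouvilleSolution g μ (Ioo a b) u)
    (hsv : IsSturmLiouvilleSolution g τ (Ioo a b) v) (hua : u a = 0) (hub : u b = 0) :
    ∃ x ∈ Ioo a b, u x * v x ≤ 0 := by
  by_contra! huv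
  have hg0 : ∀ x ∈ Ioo a b, g x ≠ 0 := fun x hx => (hgpos x (Ioo_subset_Icc_self hx)).ne'
  have hS : {x ∈ Ioo a b | ¬DifferentiableAt ℝ g x}.Countable := by
    refine Set.Subsingleton.countable ?_
    rcases eq_or_ne μ 0 with hμ | hμ
    · exact hsv.subsingleton_not_differentiableAt ordConnected_Ioo hv.differentiable_deriv_two
        (hμ ▸ hμτ).ne' hg0 fun x hx => right_ne_zero_of_mul (huv x hx).ne'
    · exact hsu.subsingleton_not_differentiableAt ordConnected_Ioo hu.differentiable_deriv_two
        hμ hg0 fun x hx => left_ne_zero_of_mul (huv x hx).ne'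
  have hlt := hsu.wronskian_lt_wronskian hμτ hab hg
    (fun x hx => hgpos x (Ioo_subset_Icc_self hx)) hu hv hsv hS huv
  have hu' := hu.differentiable two_ne_zero
  have hv' := hv.differentiable two_ne_zero
  have hWa : 0 ≤ sturmLiouvilleWronskian g u v a := by
    rw [sturmLiouvilleWronskian_of_eq_zero (hu' a) (hv' a) hua]
    refine mul_nonneg (hgpos a ⟨le_rfl, hab.le⟩).le
      (nonneg_of_hasDerivAt_of_eventually_nonneg_right ((hu' a).mul (hv' a)).hasDerivAt
        (by simp [hua]) ?_)
    filter_upwards [Ioo_mem_nhdsGT hab] with x hx using (huv x hx).le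
  have hWb : sturmLiouvilleWronskian g u v b ≤ 0 := by
    rw [sturmLiouvilleWronskian_of_eq_zero (hu' b) (hv' b) hub]
    refine mul_nonpos_of_nonneg_of_nonpos (hgpos b ⟨hab.le, le_rfl⟩).le
      (nonpos_of_hasDerivAt_of_eventually_nonneg_left ((hu' b).mul (hv' b)).hasDerivAt
        (by simp [hub]) ?_)
    filter_upwards [Ioo_mem_nhdsLT hab] with x hx using (huv x hx).le
  linarith

/-- Sturm comparison theorem for the weighted Sturm–Liouville equation:
between two consecutive zeros of a solution with eigenvalue `μ`, every
solution with the strictly larger eigenvalue `τ` must vanish. -/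
theorem sturm_comparison
    (g u v : ℝ → ℝ) (μ τ : ℝ) (hμτ : μ < τ)
    (hg : ContinuousOn g (Icc (0:ℝ) 1))
    (hgpos : ∀ x ∈ Icc (0:ℝ) 1, 0 < g x)
    (hu : ContDiff ℝ 2 u) (hv : ContDiff ℝ 2 v)
    (hequ : ∀ x ∈ Icc (0:ℝ) 1,
      -deriv (fun t => g t * deriv u t) x = μ * g x * u x)
    (heqv : ∀ x ∈ Icc (0:ℝ) 1,
      -deriv (fun t => g t * deriv v t) x = τ * g x * v x)
    (a b : ℝ) (ha : 0 ≤ a) (hab : a < b) (hb : b ≤ 1)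
    (hua : u a = 0) (hub : u b = 0)
    (hune : ∀ x ∈ Ioo a b, u x ≠ 0) :
    ∃ x ∈ Ioo a b, v x = 0 := by
  by_contra! hvne
  have hsub : Icc a b ⊆ Icc 0 1 := Icc_subset_Icc ha hb
  have hsu : IsSturmLiouvilleSolution g μ (Ioo a b) u :=
    IsSturmLiouvilleSolution.mono hequ (Ioo_subset_Icc_self.trans hsub)
  have hsv : IsSturmLiouvilleSolution g τ (Ioo a b) v :=
    IsSturmLiouvilleSolution.mono heqv (Ioo_subset_Icc_self.trans hsub)
  have hgab := hg.mono hsub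
  have hgpos' : ∀ x ∈ Icc a b, 0 < g x := fun x hx => hgpos x (hsub hx)
  have huv : ContinuousOn (fun x => u x * v x) (Ioo a b) :=
    (hu.continuous.mul hv.continuous).continuousOn
  rcases isPreconnected_Ioo.forall_pos_or_forall_neg huv
    (fun x hx => mul_ne_zero (hune x hx) (hvne x hx)) with hpos | hneg
  · obtain ⟨x, hx, hle⟩ := hsu.exists_mul_nonpos hμτ hab hgab hgpos' hu hv hsv hua hub
    exact (hpos x hx).not_ge hle
  · obtain ⟨x, hx, hle⟩ := hsu.exists_mul_nonpos hμτ hab hgab hgpos' hu hv.neg hsv.neg hua hub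
    exact (hneg x hx).not_ge (by simpa using hle)
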